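/- arXiv:2204.12773 — 2 statements merged into one kernel-verified Lean document; each statement's English description precedes it below -/
import Mathlib

section
/- Let 0 = d_0 < d_1 < ⋯ < d_r < n be natural numbers and let L_1 ⊆ L_2 ⊆ ⋯ ⊆ L_r be ℂ-subspaces of Fin n → ℂ with dim L_k = d_k for all k, such that for each k the coordinate projection π_{{0,…,d_k−1}} restricted to L_k is a linear isomorphism. Then there exists a unique d_r × n matrix M over ℂ such that: (i) for each k ∈ {1,…,r}, each row index i with d_{k−1} ≤ i < d_k, and each column index j < d_k, the entry M i j equals 1 if i = j and 0 otherwise; and (ii) for each k, L_k equals the span of the first d_k rows of M. -/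
/-!
Row `i` of the `k`-th block of `M` must lie in `L_k` and have prescribed coordinates
`j < d_k`; since the projection to those coordinates is bijective on `L_k`, there is exactly one
such row. Conversely, by monotonicity of the flag the first `d_k` rows so obtained lie in `L_k`,
and they are unitriangular in the first `d_k` columns, hence linearly independent; as
`dim L_k = d_k` they span `L_k`.
-/

open Module Submodule

section Unitriangular

variable {K : Type*} [Field K] {m n : ℕ}

theorem linearIndependent_of_unitriangular (hmn : m ≤ n) {v : Fin m → Fin n → K}
    (hv : ∀ i : Fin m, ∀ j : Fin n, (j : ℕ) ≤ i → v i j = if (i : ℕ) = j then 1 else 0) :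
    LinearIndependent K v := by
  set A : Matrix (Fin m) (Fin m) K := Matrix.of fun a b => v a (Fin.castLE hmn b)
  have hA : A.IsUpperTriangular := fun a b (hba : b < a) => by
    simp [A, hv a (Fin.castLE hmn b) hba.le, Fin.val_ne_of_ne hba.ne']
  have hdet : A.det = 1 := by
    rw [Matrix.det_of_isUpperTriangular hA]
    simp [A, hv]
  have hArows : LinearIndependent K A.row := by
    rw [Matrix.linearIndependent_rows_iff_isUnit, Matrix.isUnit_iff_isUnit_det, hdet]
    exact isUnit_one
  exact hArows.of_comp (LinearMap.funLeft K K (Fin.castLE hmn))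

theorem span_eq_of_unitriangular {L : Submodule K (Fin n → K)} (hmn : m ≤ n)
    (hL : finrank K L = m) {v : Fin m → Fin n → K} (hvL : ∀ i, v i ∈ L)
    (hv : ∀ i : Fin m, ∀ j : Fin n, (j : ℕ) ≤ i → v i j = if (i : ℕ) = j then 1 else 0) :
    span K (Set.range v) = L := by
  refine eq_of_le_of_finrank_le (span_le.2 (Set.range_subset_iff.2 hvL)) ?_
  rw [hL, finrank_span_eq_card (linearIndependent_of_unitriangular hmn hv), Fintype.card_fin]

end Unitriangular

section Restriction

variable {K ι : Type*} [Semiring K] {L : Submodule K (ι → K)} {p : ι → Prop}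

theorem exists_mem_restrict_eq
    (h : Function.Surjective ((LinearMap.funLeft K K (Subtype.val : {j // p j} → ι)).comp
      L.subtype)) (w : {j // p j} → K) :
    ∃ x ∈ L, ∀ j : {j // p j}, x j = w j := by
  obtain ⟨⟨x, hx⟩, hxw⟩ := h w
  exact ⟨x, hx, fun j => congrFun hxw j⟩

theorem eq_of_mem_of_restrict_eq
    (h : Function.Injective ((LinearMap.funLeft K K (Subtype.val : {j // p j} → ι)).comp
      L.subtype)) {x y : ι → K} (hx : x ∈ L) (hy : y ∈ L) (hxy : ∀ j, p j → x j = y j) :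
    x = y :=
  congrArg Subtype.val (@h ⟨x, hx⟩ ⟨y, hy⟩ (funext fun j => hxy j j.2))

end Restriction

section Blocks

variable {d : ℕ → ℕ} {r : ℕ}

theorem exists_apply_le_lt_apply_succ (hd0 : d 0 = 0) {i : ℕ} (hi : i < d r) :
    ∃ k < r, d k ≤ i ∧ i < d (k + 1) := by
  induction r with
  | zero => omega
  | succ s ih =>
    by_cases his : i < d s
    · obtain ⟨k, hks, hk⟩ := ih his
      exact ⟨k, by omega, hk⟩
    · exact ⟨s, by omega, by omega, hi⟩

theorem le_of_apply_le_of_lt_apply_succ (hd : ∀ k < r, d k < d (k + 1)) {k k' i : ℕ}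
    (hk : k < r) (hk' : k' ≤ r) (h₁ : d k' ≤ i) (h₂ : i < d (k + 1)) : k' ≤ k := by
  by_contra! h
  have : d (k + 1) ≤ d k' := (strictMonoOn_Iic_of_lt_succ hd).monotoneOn hk hk' h
  omega

end Blocks

/-- Let `0 = d_0 < d_1 < ⋯ < d_r < n` and let `L_1 ⊆ ⋯ ⊆ L_r` be a flag of subspaces of
`Fin n → ℂ` with `dim L_k = d_k`, such that for each `k` the projection to the first
`d_k` coordinates restricts to a linear isomorphism on `L_k`.  Then there is a unique
`d_r × n` matrix `M` in the blocked normal form (identity/zero pattern in the columns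
`j < d_k` of the row block `d_{k-1} ≤ i < d_k`) such that each `L_k` is the span of the
first `d_k` rows of `M`.  (Here `L k` denotes `L_{k+1}` and the index `k : Fin r`
runs over `0, …, r-1`.) -/
theorem stmt5 (n r : ℕ) (d : ℕ → ℕ) (hd0 : d 0 = 0)
    (hd : ∀ k < r, d k < d (k + 1)) (hdn : d r < n)
    (L : Fin r → Submodule ℂ (Fin n → ℂ)) (hmono : Monotone L)
    (hrank : ∀ k : Fin r, Module.finrank ℂ (L k) = d ((k : ℕ) + 1))
    (hbij : ∀ k : Fin r, Function.Bijective
      ((LinearMap.funLeft ℂ ℂ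
          (fun j : {j : Fin n // (j : ℕ) < d ((k : ℕ) + 1)} => (j : Fin n))).comp
        (L k).subtype)) :
    ∃! M : Matrix (Fin (d r)) (Fin n) ℂ,
      (∀ k : Fin r, ∀ i : Fin (d r), ∀ j : Fin n,
          d (k : ℕ) ≤ (i : ℕ) → (i : ℕ) < d ((k : ℕ) + 1) → (j : ℕ) < d ((k : ℕ) + 1) →
          M i j = if (i : ℕ) = (j : ℕ) then 1 else 0)
      ∧ (∀ k : Fin r, L k = Submodule.span ℂ
          (Set.range fun i : {i : Fin (d r) // (i : ℕ) < d ((k : ℕ) + 1)} => M i)) := by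
  have hblock (i : Fin (d r)) : ∃ k : Fin r, d k ≤ i ∧ i < d (k + 1) := by
    obtain ⟨k, hk, h⟩ := exists_apply_le_lt_apply_succ hd0 i.2
    exact ⟨⟨k, hk⟩, h⟩
  choose blk hblk using hblock
  have blk_le (k : Fin r) (i : Fin (d r)) (hi : i < d (k + 1)) : blk i ≤ k :=
    le_of_apply_le_of_lt_apply_succ hd k.2 (blk i).2.le (hblk i).1 hi
  have hrow (i : Fin (d r)) : ∃ x ∈ L (blk i), ∀ j : {j : Fin n // (j : ℕ) < d (blk i + 1)},
      x j = if (i : ℕ) = j then 1 else 0 :=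
    exists_mem_restrict_eq (hbij _).2 _
  choose M hML hMpat using hrow
  have pat (k : Fin r) (i : Fin (d r)) (j : Fin n) (h₁ : d k ≤ i) (h₂ : i < d (k + 1))
      (hj : j < d (k + 1)) : M i j = if (i : ℕ) = j then 1 else 0 := by
    obtain rfl : blk i = k :=
      le_antisymm (blk_le k i h₂)
        (le_of_apply_le_of_lt_apply_succ hd (blk i).2 k.2.le h₁ (hblk i).2)
    exact hMpat i ⟨j, hj⟩
  refine ⟨M, ⟨pat, fun k => ?_⟩, fun M' ⟨pat', span'⟩ => funext fun i => ?_⟩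
  · have hk : d (k + 1) ≤ d r :=
      (strictMonoOn_Iic_of_lt_succ hd).monotoneOn k.2 (Set.mem_Iic.2 le_rfl) k.2
    rw [← EquivLike.range_comp _ (Fin.castLEquiv hk)]
    refine (span_eq_of_unitriangular (hk.trans hdn.le) (hrank k)
      (fun a => hmono (blk_le k _ a.2) (hML _)) fun a j hj => ?_).symm
    exact pat _ _ j (hblk _).1 (hblk _).2 (hj.trans_lt (hblk (Fin.castLE hk a)).2)
  · have hM'i : M' i ∈ L (blk i) := span' (blk i) ▸ subset_span ⟨⟨i, (hblk i).2⟩, rfl⟩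
    exact eq_of_mem_of_restrict_eq (hbij (blk i)).1 hM'i (hML i) fun j hj =>
      (pat' _ i j (hblk i).1 (hblk i).2 hj).trans (pat _ i j (hblk i).1 (hblk i).2 hj).symm
end

section
/- Let a, b, c, d ∈ ℂ, let M be the 2 × 4 matrix with rows (1, 0, a, b) and (0, 1, c, d), and let L be the row span of M. Then for every 2-element subset I of Fin 4 the coordinate projection π_I restricted to L is a linear isomorphism onto (I → ℂ) if and only if a ≠ 0, b ≠ 0, c ≠ 0, d ≠ 0 and a·d − b·c ≠ 0. -/
/-- The coordinate projection `π_I : (Fin n → ℂ) → (I → ℂ)`, restricting a vector to its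
coordinates in `I`. -/
def coordProj {n : ℕ} (I : Finset (Fin n)) : (Fin n → ℂ) →ₗ[ℂ] (I → ℂ) :=
  LinearMap.funLeft ℂ ℂ (fun j : I => (j : Fin n))

/-!
The rows of `M` are linearly independent, so `v ↦ v ᵥ* M` identifies `ℂ²` with `L`, and `π_{x,y}`
restricted to `L` becomes `v ↦ v ᵥ* N`, where `N` is the `2 × 2` submatrix of `M` in the columns
`x, y`. It is an isomorphism iff `det N ≠ 0`, and the six minors of `M` are
`1, c, d, -a, -b, ad - bc`.
-/

open Function Matrix Submodule

theorem Finset.forall_card_eq_two_iff {α : Type*} [DecidableEq α] {P : Finset α → Prop} :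
    (∀ I : Finset α, I.card = 2 → P I) ↔ ∀ x y, x ≠ y → P {x, y} := by
  refine ⟨fun h x y hxy ↦ h _ (card_pair hxy), fun h I hI ↦ ?_⟩
  obtain ⟨x, y, hxy, rfl⟩ := card_eq_two.mp hI
  exact h x y hxy

section CoordProj

variable {m : Type*} [Fintype m] {n : ℕ}

theorem coordProj_comp_span_row_bijective_iff {M : Matrix m (Fin n) ℂ}
    (hM : LinearIndependent ℂ M.row) (I : Finset (Fin n)) :
    Bijective ((coordProj I).comp (span ℂ (Set.range M.row)).subtype) ↔
      Bijective ((coordProj I).comp M.vecMulLinear) := by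
  let e : (m → ℂ) ≃ₗ[ℂ] span ℂ (Set.range M.row) :=
    (LinearEquiv.ofInjective _ (vecMul_injective_iff.mpr hM)).trans
      (LinearEquiv.ofEq _ _ (range_vecMulLinear M))
  have hcomp : ⇑((coordProj I).comp M.vecMulLinear) =
      (coordProj I).comp (span ℂ (Set.range M.row)).subtype ∘ e := rfl
  rw [hcomp, Bijective.of_comp_iff _ e.bijective]

theorem vecMul_submatrix_id (M : Matrix m (Fin n) ℂ) (f : m → Fin n) (v : m → ℂ) :
    v ᵥ* M.submatrix id f = (v ᵥ* M) ∘ f := rfl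

theorem ker_coordProj_image_comp_vecMulLinear (M : Matrix m (Fin n) ℂ) (f : m → Fin n) :
    LinearMap.ker ((coordProj (Finset.univ.image f)).comp M.vecMulLinear) =
      LinearMap.ker (M.submatrix id f).vecMulLinear := by
  ext v
  simp [coordProj, funext_iff, vecMul_submatrix_id]

theorem coordProj_image_comp_vecMulLinear_bijective_iff [DecidableEq m]
    (M : Matrix m (Fin n) ℂ) {f : m → Fin n} (hf : Injective f) :
    Bijective ((coordProj (Finset.univ.image f)).comp M.vecMulLinear) ↔
      IsUnit (M.submatrix id f).det := by
  have hdim : Module.finrank ℂ (m → ℂ) = Module.finrank ℂ (Finset.univ.image f → ℂ) := by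
    rw [Module.finrank_fintype_fun_eq_card, Module.finrank_fintype_fun_eq_card, Fintype.card_coe,
      Finset.card_image_of_injective _ hf, Finset.card_univ]
  rw [Bijective, ← LinearMap.injective_iff_surjective_of_finrank_eq_finrank hdim, and_self,
    ← LinearMap.ker_eq_bot, ker_coordProj_image_comp_vecMulLinear, LinearMap.ker_eq_bot,
    ← isUnit_iff_isUnit_det, ← vecMul_injective_iff_isUnit]
  rfl

theorem coordProj_pair_comp_vecMulLinear_bijective_iff (M : Matrix (Fin 2) (Fin n) ℂ)
    {x y : Fin n} (hxy : x ≠ y) :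
    Bijective ((coordProj {x, y}).comp M.vecMulLinear) ↔ M 0 x * M 1 y - M 0 y * M 1 x ≠ 0 := by
  have hinj : Injective ![x, y] := by
    intro i j
    fin_cases i <;> fin_cases j <;> simp [hxy, hxy.symm]
  have himage : Finset.univ.image ![x, y] = {x, y} := by
    simp [Fin.univ_succ, Finset.image_insert]
  rw [← himage, coordProj_image_comp_vecMulLinear_bijective_iff M hinj, isUnit_iff_ne_zero,
    det_fin_two]
  rfl

end CoordProj

theorem pair_minors_ne_zero_iff (a b c d : ℂ) :
    (∀ x y : Fin 4, x ≠ y →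
        ![1, 0, a, b] x * ![0, 1, c, d] y - ![1, 0, a, b] y * ![0, 1, c, d] x ≠ 0) ↔
      a ≠ 0 ∧ b ≠ 0 ∧ c ≠ 0 ∧ d ≠ 0 ∧ a * d - b * c ≠ 0 := by
  constructor
  · intro h
    have ha := h 1 2 (by decide)
    have hb := h 1 3 (by decide)
    have hc := h 0 2 (by decide)
    have hd := h 0 3 (by decide)
    have hdet := h 2 3 (by decide)
    simp_all
  · rintro ⟨ha, hb, hc, hd, hdet⟩ x y hxy
    have hdet' : b * c - a * d ≠ 0 := fun h ↦ hdet (by linear_combination -h)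
    fin_cases x <;> fin_cases y <;> simp_all

/-- Let `L` be the row span of the matrix with rows `(1, 0, a, b)` and `(0, 1, c, d)`.
Then every coordinate projection `π_I`, for `I ⊆ Fin 4` with `|I| = 2`, restricts to a
linear isomorphism on `L` iff `a ≠ 0`, `b ≠ 0`, `c ≠ 0`, `d ≠ 0` and `a·d − b·c ≠ 0`:
this characterizes the smallest chart of the distinguished atlas on `Gr(2;4)`. -/
theorem stmt11 (a b c d : ℂ) (M : Matrix (Fin 2) (Fin 4) ℂ)
    (hM : M = Matrix.of ![![1, 0, a, b], ![0, 1, c, d]])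
    (L : Submodule ℂ (Fin 4 → ℂ))
    (hL : L = Submodule.span ℂ (Set.range fun i => M i)) :
    (∀ I : Finset (Fin 4), I.card = 2 →
        Function.Bijective ((coordProj I).comp L.subtype))
      ↔ (a ≠ 0 ∧ b ≠ 0 ∧ c ≠ 0 ∧ d ≠ 0 ∧ a * d - b * c ≠ 0) := by
  subst hL
  have hrows : LinearIndependent ℂ M.row := by
    rw [← vecMul_injective_iff]
    intro v w hvw
    ext i
    fin_cases i
    · simpa [hM, vecMul, dotProduct, Fin.sum_univ_two] using congrFun hvw 0
    · simpa [hM, vecMul, dotProduct, Fin.sum_univ_two] using congrFun hvw 1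
  rw [Finset.forall_card_eq_two_iff, ← pair_minors_ne_zero_iff]
  refine forall₂_congr fun x y ↦ forall_congr' fun hxy ↦ ?_
  refine (coordProj_comp_span_row_bijective_iff hrows _).trans ?_
  rw [coordProj_pair_comp_vecMulLinear_bijective_iff M hxy, hM]
  rfl
end
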